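/- arXiv:2203.13741 — 3 statements merged into one kernel-verified Lean document; each statement's English description precedes it below -/
import Mathlib

section
/- Let ν₁ and ν₂ be finite discrete measures on ℝ^d (i.e., countable sums of nonnegative point masses), let 1 ≤ k ≤ d−1, and let E₁,…,Eₙ be k-dimensional linear subspaces of ℝ^d such that for each i the pushforwards of ν₁ and ν₂ under the orthogonal projection onto Eᵢ coincide. Assume the hypothesis H_k: for every subset J ⊆ {1,…,n} with |J| = d+1−k, the intersection ⋂_{j∈J} Eⱼ^⊥ equals {0}. Then for every x ∈ ℝ^d, |ν₁({x}) − ν₂({x})| ≤ ((d−k)/n) · max(ν₁(ℝ^d), ν₂(ℝ^d)). -/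
open MeasureTheory

open Classical in
lemma count_le (d k n : ℕ) (E : Fin n → Submodule ℝ (EuclideanSpace ℝ (Fin d)))
    (hH : ∀ J : Finset (Fin n), J.card = d + 1 - k → (⨅ j ∈ J, (E j)ᗮ) = ⊥)
    (v : EuclideanSpace ℝ (Fin d)) (hv : v ≠ 0) (hk : k ≤ d) :
    (Finset.univ.filter fun i => v ∈ (E i)ᗮ).card ≤ d - k := by
  by_contra h
  push_neg at h
  obtain ⟨J, hJsub, hJcard⟩ := Finset.exists_subset_card_eq
    (show d + 1 - k ≤ (Finset.univ.filter fun i => v ∈ (E i)ᗮ).card by omega)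
  have hbot := hH J hJcard
  have hvJ : v ∈ ⨅ j ∈ J, (E j)ᗮ := by
    simp only [Submodule.mem_iInf]
    intro j hj
    exact (Finset.mem_filter.mp (hJsub hj)).2
  rw [hbot, Submodule.mem_bot] at hvJ
  exact hv hvJ

open Classical in
lemma one_side (d k n : ℕ) (hk : k ≤ d) (hn : 1 ≤ n)
    (ν₁ ν₂ : Measure (EuclideanSpace ℝ (Fin d)))
    [IsFiniteMeasure ν₁] [IsFiniteMeasure ν₂]
    (hdisc : ∃ (y : ℕ → EuclideanSpace ℝ (Fin d)) (a : ℕ → ENNReal),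
      ν₂ = Measure.sum fun i => a i • Measure.dirac (y i))
    (E : Fin n → Submodule ℝ (EuclideanSpace ℝ (Fin d)))
    (hH : ∀ J : Finset (Fin n), J.card = d + 1 - k → (⨅ j ∈ J, (E j)ᗮ) = ⊥)
    (x : EuclideanSpace ℝ (Fin d))
    (hfib : ∀ i : Fin n, ν₁ {y | y - x ∈ (E i)ᗮ} = ν₂ {y | y - x ∈ (E i)ᗮ}) :
    (ν₁ {x}).toReal - (ν₂ {x}).toReal ≤ ((d:ℝ) - k) / n * (ν₂ Set.univ).toReal := by
  set T : Fin n → Set (EuclideanSpace ℝ (Fin d)) := fun i => {y | y - x ∈ (E i)ᗮ} with hT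
  have hTmeas : ∀ i, MeasurableSet (T i) := by
    intro i
    have hcl : IsClosed (T i) :=
      IsClosed.preimage (continuous_id.sub continuous_const)
        (Submodule.closed_of_finiteDimensional _)
    exact hcl.measurableSet
  have hxT : ∀ i, x ∈ T i := by intro i; simp [hT]
  -- split measure on fibers
  have hsplit : ∀ (μ : Measure (EuclideanSpace ℝ (Fin d))) i,
      μ (T i) = μ {x} + μ (T i \ {x}) := by
    intro μ i
    rw [← measure_union (Set.disjoint_sdiff_right) ((hTmeas i).diff (measurableSet_singleton x)),
      Set.union_diff_cancel (Set.singleton_subset_iff.mpr (hxT i))]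
  have hstepA : ∀ i, ν₁ {x} ≤ ν₂ {x} + ν₂ (T i \ {x}) := by
    intro i
    have h1 : ν₁ {x} + ν₁ (T i \ {x}) = ν₂ {x} + ν₂ (T i \ {x}) := by
      rw [← hsplit ν₁ i, ← hsplit ν₂ i]; exact hfib i
    exact le_self_add.trans h1.le
  have hstepB : ∀ i, (ν₁ {x}).toReal ≤ (ν₂ {x}).toReal + (ν₂ (T i \ {x})).toReal := by
    intro i
    have h2 := ENNReal.toReal_mono (by finiteness) (hstepA i)
    rwa [ENNReal.toReal_add (measure_ne_top _ _) (measure_ne_top _ _)] at h2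
  -- sum bound using discreteness
  obtain ⟨y, a, hν₂⟩ := hdisc
  have hstepC : ∑ i : Fin n, ν₂ (T i \ {x}) ≤ ((d - k : ℕ) : ENNReal) * ν₂ Set.univ := by
    have happ : ∀ (S : Set (EuclideanSpace ℝ (Fin d))), MeasurableSet S →
        ν₂ S = ∑' j, a j * Measure.dirac (y j) S := by
      intro S hS
      rw [hν₂, Measure.sum_apply _ hS]
      simp [Measure.smul_apply]
    calc ∑ i : Fin n, ν₂ (T i \ {x})
        = ∑ i : Fin n, ∑' j, a j * Measure.dirac (y j) (T i \ {x}) := by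
          refine Finset.sum_congr rfl fun i _ => happ _ ((hTmeas i).diff (measurableSet_singleton x))
      _ = ∑' j, ∑ i : Fin n, a j * Measure.dirac (y j) (T i \ {x}) :=
          (Summable.tsum_finsetSum (fun i _ => ENNReal.summable)).symm
      _ ≤ ∑' j, a j * ((d - k : ℕ) : ENNReal) := by
          refine ENNReal.tsum_le_tsum fun j => ?_
          rw [← Finset.mul_sum]
          refine mul_le_mul_right ?_ _
          have hdir : ∀ i, Measure.dirac (y j) (T i \ {x})
              = if y j - x ∈ (E i)ᗮ ∧ y j ≠ x then (1 : ENNReal) else 0 := by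
            intro i
            rw [Measure.dirac_apply' _ ((hTmeas i).diff (measurableSet_singleton x))]
            have hiff : y j ∈ T i \ {x} ↔ (y j - x ∈ (E i)ᗮ ∧ y j ≠ x) := by
              simp [hT, Set.mem_diff]
            by_cases h : y j - x ∈ (E i)ᗮ ∧ y j ≠ x
            · rw [Set.indicator_of_mem (hiff.mpr h)]; simp [h]
            · rw [Set.indicator_of_notMem (fun hc => h (hiff.mp hc))]; simp [h]
          simp only [hdir]
          rw [Finset.sum_boole]
          by_cases hyx : y j = x
          · have hemp : (Finset.univ.filter fun i => y j - x ∈ (E i)ᗮ ∧ y j ≠ x) = ∅ := by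
              ext i; simp [hyx]
            rw [hemp]; simp
          · have hfe : (Finset.univ.filter fun i => y j - x ∈ (E i)ᗮ ∧ y j ≠ x)
                = (Finset.univ.filter fun i => y j - x ∈ (E i)ᗮ) := by
              ext i; simp [hyx]
            rw [hfe]
            exact_mod_cast Nat.cast_le.mpr
              (count_le d k n E hH (y j - x) (sub_ne_zero.mpr hyx) hk)
      _ = ((d - k : ℕ) : ENNReal) * ∑' j, a j := by
          rw [ENNReal.tsum_mul_right, mul_comm]
      _ = ((d - k : ℕ) : ENNReal) * ν₂ Set.univ := by
          rw [happ Set.univ MeasurableSet.univ]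
          simp
  -- to real
  have hstepD : ∑ i : Fin n, (ν₂ (T i \ {x})).toReal
      ≤ ((d - k : ℕ) : ℝ) * (ν₂ Set.univ).toReal := by
    rw [← ENNReal.toReal_sum (fun i _ => measure_ne_top _ _)]
    have := ENNReal.toReal_mono (by finiteness) hstepC
    rwa [ENNReal.toReal_mul, ENNReal.toReal_natCast] at this
  have hsumB : (n : ℝ) * (ν₁ {x}).toReal
      ≤ (n : ℝ) * (ν₂ {x}).toReal + ((d - k : ℕ) : ℝ) * (ν₂ Set.univ).toReal := by
    have h3 : ∑ _i : Fin n, (ν₁ {x}).toReal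
        ≤ ∑ i : Fin n, ((ν₂ {x}).toReal + (ν₂ (T i \ {x})).toReal) :=
      Finset.sum_le_sum fun i _ => hstepB i
    simp only [Finset.sum_add_distrib, Finset.sum_const, Finset.card_univ, Fintype.card_fin,
      nsmul_eq_mul] at h3
    linarith
  have hn' : (0 : ℝ) < n := by exact_mod_cast hn
  have hdk : ((d - k : ℕ) : ℝ) = (d : ℝ) - k := by
    rw [Nat.cast_sub hk]
  rw [div_mul_eq_mul_div, le_div_iff₀ hn']
  rw [← hdk]
  nlinarith [hsumB]

/-- Distance bound between two finite discrete measures on `ℝ^d` whose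
pushforwards under the orthogonal projections onto `k`-dimensional subspaces
`E₁,…,Eₙ` coincide, under the hypothesis `H_k` that every `d+1-k` of the
orthogonal complements `Eᵢᗮ` intersect trivially: the masses of the atoms
differ by at most `((d-k)/n)·max(|ν₁|,|ν₂|)`. -/
theorem stmt_0 (d k n : ℕ) (hk1 : 1 ≤ k) (hkd : k ≤ d - 1) (hn : 1 ≤ n)
    (ν₁ ν₂ : Measure (EuclideanSpace ℝ (Fin d)))
    (hν₁fin : IsFiniteMeasure ν₁) (hν₂fin : IsFiniteMeasure ν₂)
    (hν₁disc : ∃ (x : ℕ → EuclideanSpace ℝ (Fin d)) (a : ℕ → ENNReal),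
      ν₁ = Measure.sum fun i => a i • Measure.dirac (x i))
    (hν₂disc : ∃ (x : ℕ → EuclideanSpace ℝ (Fin d)) (a : ℕ → ENNReal),
      ν₂ = Measure.sum fun i => a i • Measure.dirac (x i))
    (E : Fin n → Submodule ℝ (EuclideanSpace ℝ (Fin d)))
    (hEdim : ∀ i, Module.finrank ℝ (E i) = k)
    (hproj : ∀ i, ν₁.map (fun v => (Submodule.orthogonalProjectionOnto (E i) v : E i))
      = ν₂.map (fun v => (Submodule.orthogonalProjectionOnto (E i) v : E i)))
    (hH : ∀ J : Finset (Fin n), J.card = d + 1 - k → (⨅ j ∈ J, (E j)ᗮ) = ⊥) :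
    ∀ x : EuclideanSpace ℝ (Fin d),
      |(ν₁ {x}).toReal - (ν₂ {x}).toReal| ≤
        ((d : ℝ) - k) / n * max (ν₁ Set.univ).toReal (ν₂ Set.univ).toReal := by
  intro x
  haveI := hν₁fin; haveI := hν₂fin
  have hk : k ≤ d := by omega
  have hfib : ∀ i : Fin n, ν₁ {y | y - x ∈ (E i)ᗮ} = ν₂ {y | y - x ∈ (E i)ᗮ} := by
    intro i
    have hmeas : Measurable (fun v : EuclideanSpace ℝ (Fin d) =>
        (Submodule.orthogonalProjectionOnto (E i) v : E i)) :=
      (Submodule.orthogonalProjectionOnto (E i)).continuous.measurable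
    have hpre : (fun v : EuclideanSpace ℝ (Fin d) => (Submodule.orthogonalProjectionOnto (E i) v : E i))
        ⁻¹' {(Submodule.orthogonalProjectionOnto (E i) x : E i)} = {y | y - x ∈ (E i)ᗮ} := by
      ext z
      simp only [Set.mem_preimage, Set.mem_singleton_iff, Set.mem_setOf_eq]
      constructor
      · intro h
        rw [← Submodule.orthogonalProjectionOnto_eq_zero_iff, map_sub, h, sub_self]
      · intro h
        have h1 := Submodule.orthogonalProjectionOnto_eq_zero_iff.mpr h
        rw [map_sub] at h1
        exact sub_eq_zero.mp h1
    have h2 := congrArg (fun μ : Measure (E i) =>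
      μ {(Submodule.orthogonalProjectionOnto (E i) x : E i)}) (hproj i)
    rwa [Measure.map_apply hmeas (measurableSet_singleton _),
      Measure.map_apply hmeas (measurableSet_singleton _), hpre] at h2
  have h12 := one_side d k n hk hn ν₁ ν₂ hν₂disc E hH x hfib
  have h21 := one_side d k n hk hn ν₂ ν₁ hν₁disc E hH x (fun i => (hfib i).symm)
  have hcoef : (0 : ℝ) ≤ ((d : ℝ) - k) / n :=
    div_nonneg (sub_nonneg.mpr (by exact_mod_cast hk)) (Nat.cast_nonneg n)
  rw [abs_sub_le_iff]
  constructor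
  · exact h12.trans (mul_le_mul_of_nonneg_left (le_max_right _ _) hcoef)
  · exact h21.trans (mul_le_mul_of_nonneg_left (le_max_left _ _) hcoef)
end

section
/- Fix m, d ∈ ℕ with d ≥ 1 and let D = card{k ∈ ℕ^d : |k| ≤ m}. If c₁,…,c_D are independent random vectors, each uniformly distributed on [0,1]^d, then the random D×D matrix Q with rows indexed by i ∈ {1,…,D}, columns indexed by multi-indices k ∈ ℕ^d with |k| ≤ m, and entries Q_{i,k} = cᵢ^k = ∏_{j=1}^d c_{i,j}^{k_j}, is almost surely invertible. -/
open MeasureTheory ProbabilityTheory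
open Set MvPolynomial

theorem myBoundedBy_mono {α : Type*} {m₁ m₂ : Set α → ENNReal} (h : ∀ s, m₁ s ≤ m₂ s) :
    OuterMeasure.boundedBy m₁ ≤ OuterMeasure.boundedBy m₂ := by
  intro s
  rw [OuterMeasure.boundedBy_apply, OuterMeasure.boundedBy_apply]
  exact iInf_mono fun t => iInf_mono fun ht => ENNReal.tsum_le_tsum fun n =>
    iSup_mono fun _ => h _

theorem myPi_mono {ι : Type*} [Fintype ι] {α : ι → Type*} [∀ i, MeasurableSpace (α i)]
    {μ ν : ∀ i, Measure (α i)} (h : ∀ i, ν i ≤ μ i) : Measure.pi ν ≤ Measure.pi μ := by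
  refine Measure.le_iff.2 fun s hs => ?_
  rw [Measure.pi, Measure.pi, toMeasure_apply _ _ hs,
    toMeasure_apply _ _ hs]
  refine myBoundedBy_mono (fun t => ?_) s
  exact Finset.prod_le_prod' fun i _ => (h i) _

theorem zeroLocus_fin (n : ℕ) (p : MvPolynomial (Fin n) ℝ) (hp : p ≠ 0) :
    (volume : Measure (Fin n → ℝ)) {x | eval x p = 0} = 0 := by
  induction n with
  | zero =>
    convert measure_empty
    · ext x
      simp only [mem_setOf_eq, mem_empty_iff_false, iff_false]
      have : x = isEmptyElim := funext fun i => i.elim0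
      rw [this]
      rw [MvPolynomial.eq_C_of_isEmpty p] at hp ⊢
      simpa using hp
    · infer_instance
  | succ n ih =>
    set q : Polynomial (MvPolynomial (Fin n) ℝ) := finSuccEquiv ℝ n p with hqdef
    have hq : q ≠ 0 := by
      intro h
      exact hp ((finSuccEquiv ℝ n).injective (by simpa [hqdef] using h))
    obtain ⟨i0, hi0⟩ : ∃ i, q.coeff i ≠ 0 := by
      by_contra h
      push_neg at h
      exact hq (Polynomial.ext fun i => by simpa using h i)
    set Z : Set ((Fin n → ℝ) × ℝ) :=
      {z | Polynomial.eval z.2 (Polynomial.map (eval z.1) q) = 0} with hZdef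
    have hZeq : Z = {z : (Fin n → ℝ) × ℝ | eval (Fin.cons z.2 z.1) p = 0} := by
      ext z
      simp only [hZdef, mem_setOf_eq, eval_eq_eval_mv_eval', hqdef]
    have hZmeas : MeasurableSet Z := by
      rw [hZeq]
      have hg : Continuous fun z : (Fin n → ℝ) × ℝ => (Fin.cons z.2 z.1 : Fin (n + 1) → ℝ) := by
        refine continuous_pi fun i => ?_
        induction i using Fin.cases with
        | zero => simpa using continuous_snd
        | succ j => simpa using (by exact (continuous_apply j).comp continuous_fst : Continuous fun a : (Fin n → ℝ) × ℝ => a.1 j)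
      exact (isClosed_eq ((MvPolynomial.continuous_eval p).comp hg) continuous_const).measurableSet
    have key : ((volume : Measure (Fin n → ℝ)).prod (volume : Measure ℝ)) Z = 0 := by
      rw [Measure.measure_prod_null hZmeas]
      have hbad : ∀ᵐ s ∂(volume : Measure (Fin n → ℝ)), eval s (q.coeff i0) ≠ 0 := by
        rw [ae_iff]
        simpa [not_not] using ih _ hi0
      filter_upwards [hbad] with s hs
      have hr : Polynomial.map (eval s) q ≠ 0 := fun h => by
        apply hs
        have := congrArg (fun r => Polynomial.coeff r i0) h
        simpa [Polynomial.coeff_map] using this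
      have hfin : {y : ℝ | Polynomial.IsRoot (Polynomial.map (eval s) q) y}.Finite :=
        Polynomial.finite_setOf_isRoot hr
      have hsec : (Prod.mk s ⁻¹' Z) = {y : ℝ | Polynomial.IsRoot (Polynomial.map (eval s) q) y} := by
        ext y; simp [hZdef, Polynomial.IsRoot]
      show (volume : Measure ℝ) (Prod.mk s ⁻¹' Z) = 0
      rw [hsec]
      exact hfin.measure_zero _
    have hT := (Measure.measurePreserving_swap (μ := (volume : Measure ℝ))
        (ν := Measure.pi fun _ : Fin n => (volume : Measure ℝ))).comp
      (measurePreserving_piFinSuccAbove (fun _ : Fin (n + 1) => (volume : Measure ℝ)) 0)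
    have hset : {x : Fin (n + 1) → ℝ | eval x p = 0} =
        (Prod.swap ∘ (MeasurableEquiv.piFinSuccAbove (fun _ : Fin (n + 1) => ℝ) 0)) ⁻¹' Z := by
      ext x
      have hx : ∀ y : Fin (n + 1) → ℝ,
          (Fin.cons ((Fin.insertNthEquiv (fun _ => ℝ) 0).symm y).1
            ((Fin.insertNthEquiv (fun _ => ℝ) 0).symm y).2 : Fin (n + 1) → ℝ) = y := by
        intro y
        rw [Fin.insertNthEquiv_zero]
        exact (Fin.consEquiv _).apply_symm_apply y
      simp only [mem_preimage, Function.comp_apply, hZeq, mem_setOf_eq,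
        MeasurableEquiv.piFinSuccAbove_apply, Prod.swap, hx]
    rw [volume_pi, hset, hT.measure_preimage hZmeas.nullMeasurableSet, ← volume_pi]
    exact key

theorem zeroLocus_pi {ι : Type*} [Fintype ι] (p : MvPolynomial ι ℝ) (hp : p ≠ 0) :
    (Measure.pi fun _ : ι => (volume : Measure ℝ)) {x | eval x p = 0} = 0 := by
  classical
  obtain ⟨n, ⟨e⟩⟩ : ∃ n, Nonempty (ι ≃ Fin n) := ⟨Fintype.card ι, ⟨Fintype.equivFin ι⟩⟩
  set p' : MvPolynomial (Fin n) ℝ := rename e p with hp'def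
  have hp' : p' ≠ 0 := fun h => hp (by
    apply rename_injective (e : ι → Fin n) e.injective
    rw [← hp'def, h, map_zero])
  have hS : MeasurableSet {x : ι → ℝ | eval x p = 0} :=
    (isClosed_eq (MvPolynomial.continuous_eval p) continuous_const).measurableSet
  have hmp := measurePreserving_piCongrLeft (fun _ : ι => (volume : Measure ℝ)) e.symm
  rw [← hmp.measure_preimage hS.nullMeasurableSet]
  have : (MeasurableEquiv.piCongrLeft (fun _ : ι => ℝ) e.symm) ⁻¹' {x | eval x p = 0}
      = {g : Fin n → ℝ | eval g p' = 0} := by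
    ext g
    simp only [mem_preimage, mem_setOf_eq, hp'def, eval_rename]
    have hfun : (MeasurableEquiv.piCongrLeft (fun _ : ι => ℝ) e.symm) g = g ∘ e := by
      funext i
      have := MeasurableEquiv.piCongrLeft_apply_apply (β := fun _ : ι => ℝ) e.symm g (e i)
      simpa using this
    rw [hfun]
  rw [this, ← volume_pi]
  exact zeroLocus_fin n p' hp'

theorem exists_eval_det_ne_zero {α K : Type*} [Field K] :
    ∀ (n : ℕ) (f : Fin n → α → K), LinearIndependent K f →
      ∃ a : Fin n → α, (Matrix.of fun i j => f j (a i)).det ≠ 0 := by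
  intro n
  induction n with
  | zero =>
    intro f _
    exact ⟨Fin.elim0, by simp [Matrix.det_fin_zero]⟩
  | succ n ih =>
    intro f hf
    obtain ⟨a', ha'⟩ := ih (fun j => f j.castSucc) (hf.comp Fin.castSucc (Fin.castSucc_injective n))
    set M : α → Matrix (Fin (n + 1)) (Fin (n + 1)) K :=
      fun x => Matrix.of fun i j => f j (Fin.snoc (α := fun _ => α) a' x i) with hM
    set N : Fin (n + 1) → Matrix (Fin n) (Fin n) K :=
      fun j => Matrix.of fun i' j' => f (j.succAbove j') (a' i') with hN
    set c : Fin (n + 1) → K := fun j => (-1 : K) ^ ((n : ℕ) + (j : ℕ)) * (N j).det with hc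
    have hdet : ∀ x, (M x).det = ∑ j, c j * f j x := by
      intro x
      rw [Matrix.det_succ_row (M x) (Fin.last n)]
      refine Finset.sum_congr rfl fun j _ => ?_
      have h1 : (M x) (Fin.last n) j = f j x := by
        simp [hM, Fin.snoc_last]
      have h2 : (M x).submatrix (Fin.last n).succAbove j.succAbove = N j := by
        ext i' j'
        simp [hM, hN, Matrix.submatrix, Fin.succAbove_last, Fin.snoc_castSucc]
      rw [h1, h2]
      simp only [Fin.val_last]
      ring
    have hclast : c (Fin.last n) ≠ 0 := by
      have : N (Fin.last n) = Matrix.of fun i' j' => f j'.castSucc (a' i') := by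
        ext i' j'
        simp [hN, Fin.succAbove_last]
      simp only [hc, this, Fin.val_last]
      intro h
      rcases mul_eq_zero.1 h with h' | h'
      · exact (pow_ne_zero _ (neg_ne_zero.2 one_ne_zero)) h'
      · exact ha' h'
    have hex : ∃ x, (M x).det ≠ 0 := by
      by_contra h
      push_neg at h
      have hsum : ∑ j, c j • f j = 0 := by
        funext x
        have := h x
        rw [hdet x] at this
        simpa using this
      exact hclast (Fintype.linearIndependent_iff.1 hf c (by simpa using hsum) (Fin.last n))
    obtain ⟨x, hx⟩ := hex
    exact ⟨Fin.snoc a' x, hx⟩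

noncomputable def evalLM (σ : Type*) : MvPolynomial σ ℝ →ₗ[ℝ] ((σ → ℝ) → ℝ) where
  toFun p := fun x => eval x p
  map_add' p q := by funext x; simp
  map_smul' a p := by funext x; simp [MvPolynomial.smul_eval]

theorem monomial_li {d : ℕ} {κ : Type*} (u : κ → (Fin d →₀ ℕ)) (hu : Function.Injective u) :
    LinearIndependent ℝ (fun k : κ => fun x : Fin d → ℝ => ∏ j, x j ^ (u k j)) := by
  have h1 : LinearIndependent ℝ (fun k : κ => (monomial (u k) (1 : ℝ))) := by
    have := (basisMonomials (Fin d) ℝ).linearIndependent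
    have h2 := this.comp u hu
    rw [coe_basisMonomials] at h2; exact h2
  have hinj : LinearMap.ker (evalLM (Fin d)) = ⊥ := by
    rw [LinearMap.ker_eq_bot]
    intro p q h
    exact MvPolynomial.funext fun x => congrFun h x
  have h3 := h1.map' (evalLM (Fin d)) hinj
  convert h3 using 1
  funext k
  funext x
  simp [evalLM, eval_monomial, Finsupp.prod_pow]
  all_goals rfl

/-- If `c₁,…,c_D` (where `D = card{k ∈ ℕ^d : |k| ≤ m}`) are i.i.d. random
vectors, uniformly distributed on `[0,1]^d`, then the generalized Vandermonde
matrix with entries `cᵢ^k` (rows `i`, columns the multi-indices `k` with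
`|k| ≤ m`) is almost surely invertible. (Multi-indices `k ∈ ℕ^d` with `|k| ≤ m`
are represented as elements of `{k : Fin d → Fin (m+1) // Σ k ≤ m}`, which is
in bijection with them since each coordinate of such a multi-index is `≤ m`.) -/
theorem stmt_3 (m d : ℕ) (hd : 1 ≤ d) (D : ℕ)
    (e : Fin D ≃ {k : Fin d → Fin (m + 1) // ∑ j, (k j : ℕ) ≤ m})
    {Ω : Type*} [MeasurableSpace Ω] (P : Measure Ω) [IsProbabilityMeasure P]
    (c : Fin D → Ω → (Fin d → ℝ))
    (hmeas : ∀ i, Measurable (c i))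
    (hunif : ∀ i, P.map (c i) = volume.restrict (Set.Icc (0 : Fin d → ℝ) 1))
    (hindep : iIndepFun c P) :
    ∀ᵐ ω ∂P,
      ((Matrix.of fun (i : Fin D)
          (k : {k : Fin d → Fin (m + 1) // ∑ j, (k j : ℕ) ≤ m}) =>
            ∏ j, c i ω j ^ ((k : Fin d → Fin (m + 1)) j : ℕ)).submatrix
          id e).det ≠ 0 := by
  classical
  -- the determinant as a polynomial
  set PM : Matrix (Fin D) (Fin D) (MvPolynomial (Fin D × Fin d) ℝ) :=
    Matrix.of fun i j =>
      ∏ t, (X (i, t) : MvPolynomial (Fin D × Fin d) ℝ) ^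
        (((e j : Fin d → Fin (m + 1)) t : ℕ)) with hPM
  set p : MvPolynomial (Fin D × Fin d) ℝ := PM.det with hpdef
  have heval : ∀ x : Fin D × Fin d → ℝ,
      eval x p = (Matrix.of fun i j =>
        ∏ t, x (i, t) ^ (((e j : Fin d → Fin (m + 1)) t : ℕ))).det := by
    intro x
    rw [hpdef, RingHom.map_det]
    congr 1
    ext i j
    simp [hPM]
  -- linear independence of the monomial functions
  have hLI : LinearIndependent ℝ (fun i : Fin D => fun y : Fin d → ℝ =>
      ∏ t, y t ^ (((e i : Fin d → Fin (m + 1)) t : ℕ))) := by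
    set u : {k : Fin d → Fin (m + 1) // ∑ j, (k j : ℕ) ≤ m} → (Fin d →₀ ℕ) :=
      fun k => Finsupp.equivFunOnFinite.symm
        (fun j => ((k : Fin d → Fin (m + 1)) j : ℕ)) with hu_def
    have hu : Function.Injective u := by
      intro k₁ k₂ h
      have h2 : (fun j => ((k₁ : Fin d → Fin (m + 1)) j : ℕ))
          = fun j => ((k₂ : Fin d → Fin (m + 1)) j : ℕ) :=
        Finsupp.equivFunOnFinite.symm.injective h
      apply Subtype.ext
      funext j
      exact Fin.val_injective (congrFun h2 j)
    have h0 := monomial_li u hu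
    have h1 := h0.comp e e.injective
    have heq : (fun i : Fin D => fun y : Fin d → ℝ =>
        ∏ t, y t ^ (((e i : Fin d → Fin (m + 1)) t : ℕ)))
        = (fun k : {k : Fin d → Fin (m + 1) // ∑ j, (k j : ℕ) ≤ m} =>
            fun x : Fin d → ℝ => ∏ j, x j ^ (u k j)) ∘ e := by
      funext i y
      simp [hu_def]
    rw [heq]
    exact h1
  obtain ⟨a, ha⟩ := exists_eval_det_ne_zero D _ hLI
  have hpne : p ≠ 0 := by
    intro h
    apply ha
    have h2 := heval (fun it : Fin D × Fin d => a it.1 it.2)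
    rw [h] at h2
    simp only [map_zero] at h2
    exact h2.symm
  -- the zero locus of p has measure zero
  have hZmeas : MeasurableSet {x : Fin D × Fin d → ℝ | eval x p = 0} :=
    (isClosed_eq (MvPolynomial.continuous_eval p) continuous_const).measurableSet
  have hZ : (Measure.pi fun _ : Fin D × Fin d => (volume : Measure ℝ))
      {x | eval x p = 0} = 0 := zeroLocus_pi p hpne
  -- the uncurrying map is measure preserving
  set T : (Fin D → Fin d → ℝ) → (Fin D × Fin d → ℝ) :=
    fun y it => y it.1 it.2 with hT_def
  have hTmeas : Measurable T :=
    measurable_pi_lambda _ fun it => (measurable_pi_apply it.2).comp (measurable_pi_apply it.1)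
  have hTmp : MeasurePreserving T
      (Measure.pi fun _ : Fin D => (volume : Measure (Fin d → ℝ)))
      (Measure.pi fun _ : Fin D × Fin d => (volume : Measure ℝ)) := by
    refine ⟨hTmeas, ?_⟩
    refine (Measure.pi_eq fun s hs => ?_).symm
    rw [Measure.map_apply hTmeas (MeasurableSet.univ_pi hs)]
    have hpre : T ⁻¹' (Set.pi univ s)
        = Set.pi univ (fun i => Set.pi univ fun j => s (i, j)) := by
      ext y
      simp only [mem_preimage, Set.mem_pi, mem_univ, forall_true_left, hT_def]
      exact ⟨fun h i j => h (i, j), fun h it => h it.1 it.2⟩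
    rw [hpre, Measure.pi_pi, Fintype.prod_prod_type]
    refine Finset.prod_congr rfl fun i _ => ?_
    rw [volume_pi, Measure.pi_pi]
  -- joint law
  set joint : Ω → (Fin D → Fin d → ℝ) := fun ω i => c i ω with hjoint_def
  have hjm : Measurable joint := measurable_pi_lambda _ fun i => hmeas i
  have hlaw : P.map joint
      = Measure.pi (fun _ : Fin D => volume.restrict (Set.Icc (0 : Fin d → ℝ) 1)) := by
    refine (Measure.pi_eq fun s hs => ?_).symm
    rw [Measure.map_apply hjm (MeasurableSet.univ_pi hs)]
    have hpre : joint ⁻¹' (Set.pi univ s) = ⋂ i, c i ⁻¹' s i := by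
      ext ω
      simp [hjoint_def, Set.mem_pi]
    rw [hpre]
    have h1 := hindep.measure_inter_preimage_eq_mul Finset.univ
      (fun i _ => hs i)
    have h2 : (⋂ i ∈ Finset.univ, c i ⁻¹' s i) = ⋂ i, c i ⁻¹' s i := by
      simp
    rw [← h2, h1]
    refine Finset.prod_congr rfl fun i _ => ?_
    rw [← hunif i, Measure.map_apply (hmeas i) (hs i)]
  -- bad event
  have hBmeas : MeasurableSet (T ⁻¹' {x | eval x p = 0}) := hTmeas hZmeas
  have hbad : P (joint ⁻¹' (T ⁻¹' {x | eval x p = 0})) = 0 := by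
    rw [← Measure.map_apply hjm hBmeas, hlaw]
    have hle : Measure.pi (fun _ : Fin D => volume.restrict (Set.Icc (0 : Fin d → ℝ) 1))
        ≤ Measure.pi (fun _ : Fin D => (volume : Measure (Fin d → ℝ))) :=
      myPi_mono fun i => Measure.restrict_le_self
    refine le_antisymm ?_ zero_le
    calc Measure.pi (fun _ : Fin D => volume.restrict (Set.Icc (0 : Fin d → ℝ) 1))
          (T ⁻¹' {x | eval x p = 0})
        ≤ Measure.pi (fun _ : Fin D => (volume : Measure (Fin d → ℝ)))
          (T ⁻¹' {x | eval x p = 0}) := hle _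
      _ = (Measure.pi fun _ : Fin D × Fin d => (volume : Measure ℝ)) {x | eval x p = 0} :=
          hTmp.measure_preimage hZmeas.nullMeasurableSet
      _ = 0 := hZ
  rw [ae_iff]
  refine le_antisymm (le_trans (measure_mono ?_) hbad.le) zero_le
  intro ω hω
  simp only [mem_setOf_eq, not_not] at hω
  simp only [mem_preimage, mem_setOf_eq]
  rw [heval]
  rw [← hω]
  congr 1
end

section
/- Let n ∈ ℕ, α₁,…,αₙ ≥ 0, and s₁,…,sₙ ∈ ℝ^d with all coordinates nonnegative. On the open set U = {t ∈ ℝ^d : ⟨t,sᵢ⟩ < 1 for all i}, define K(t) = − Σ_{i=1}^n αᵢ ln(1 − ⟨t,sᵢ⟩). Then K is smooth on U, K(−1,…,−1) = − Σ_{i=1}^n αᵢ ln(1 + |sᵢ|), and for every nonzero multi-index k ∈ ℕ^d, ∂^k K(−1,…,−1) = (|k|−1)! · Σ_{i=1}^n αᵢ (sᵢ/(1+|sᵢ|))^k, where (sᵢ/(1+|sᵢ|))^k = ∏_{j=1}^d (s_{i,j}/(1+|sᵢ|))^{k_j} and |sᵢ| = s_{i,1}+…+s_{i,d}. -/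
/-- The partial derivative of `f : ℝ^d → ℝ` in the `j`-th coordinate direction. -/
noncomputable def coordPDeriv (d : ℕ) (j : Fin d) (f : (Fin d → ℝ) → ℝ) :
    (Fin d → ℝ) → ℝ :=
  fun t => fderiv ℝ f t (Pi.single j 1)


section Aux
variable {d n : ℕ} (α : Fin n → ℝ) (s : Fin n → Fin d → ℝ)

/-- the linear map t ↦ ∑ j, t j * s i j -/
noncomputable def Bmap (s : Fin n → Fin d → ℝ) (i : Fin n) : (Fin d → ℝ) →L[ℝ] ℝ :=
  ∑ j, s i j • ContinuousLinearMap.proj j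

lemma Bmap_eq (i : Fin n) : (fun t : Fin d → ℝ => ∑ j, t j * s i j) = Bmap s i := by
  funext t
  simp [Bmap, mul_comm, ContinuousLinearMap.sum_apply]

lemma Bmap_single (i : Fin n) (j : Fin d) : Bmap s i (Pi.single j 1) = s i j := by
  simp [Bmap, ContinuousLinearMap.sum_apply, Pi.single_apply]

lemma hasFDerivAt_g (i : Fin n) (t : Fin d → ℝ) :
    HasFDerivAt (fun t : Fin d → ℝ => 1 - ∑ j, t j * s i j) (-Bmap s i) t := by
  have h := ((Bmap s i).hasFDerivAt (x := t)).const_sub 1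
  have e : (fun t : Fin d → ℝ => 1 - ∑ j, t j * s i j)
      = fun x => 1 - Bmap s i x := by
    funext x; rw [← Bmap_eq s i]
  rw [e]; exact h

lemma isOpen_U : IsOpen {t : Fin d → ℝ | ∀ i, ∑ j, t j * s i j < 1} := by
  have : {t : Fin d → ℝ | ∀ i, ∑ j, t j * s i j < 1}
      = ⋂ i, (fun t : Fin d → ℝ => ∑ j, t j * s i j) ⁻¹' Set.Iio 1 := by
    ext t; simp [Set.mem_iInter]
  rw [this]
  exact isOpen_iInter_of_finite fun i =>
    ((Bmap_eq s i ▸ (Bmap s i).continuous : Continuous _).isOpen_preimage _ isOpen_Iio)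

lemma key (L : List (Fin d)) (j : Fin d) :
    ∀ t : Fin d → ℝ, (∀ i, ∑ j, t j * s i j < 1) →
    ((j :: L).foldr (coordPDeriv d)
        (fun t : Fin d → ℝ => -∑ i, α i * Real.log (1 - ∑ j, t j * s i j))) t
    = ∑ i, ((L.length.factorial : ℝ) * α i * ((j :: L).map (s i)).prod) *
        ((1 - ∑ j', t j' * s i j')⁻¹) ^ (L.length + 1) := by
  induction L generalizing j with
  | nil =>
    intro t ht
    have hg : ∀ i : Fin n, (1 - ∑ j', t j' * s i j') ≠ 0 := fun i => by
      have := ht i; linarith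
    have hK : HasFDerivAt
        (fun t : Fin d → ℝ => -∑ i, α i * Real.log (1 - ∑ j, t j * s i j))
        (-∑ i, α i • ((1 - ∑ j', t j' * s i j')⁻¹ • (-Bmap s i))) t := by
      apply HasFDerivAt.neg
      apply HasFDerivAt.fun_sum
      intro i _
      exact ((Real.hasDerivAt_log (hg i)).comp_hasFDerivAt t
        (hasFDerivAt_g s i t)).const_mul (α i)
    simp only [List.foldr, coordPDeriv, hK.fderiv]
    simp [ContinuousLinearMap.sum_apply, Bmap_single, Finset.mul_sum]
    ring_nf
    apply Finset.sum_congr rfl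
    intro i _
    ring
  | cons j' L' ih =>
    intro t ht
    set U := {t : Fin d → ℝ | ∀ i, ∑ j, t j * s i j < 1} with hU
    have hUo : IsOpen U := isOpen_U s
    have htU : t ∈ U := ht
    have hg : ∀ i : Fin n, (1 - ∑ j', t j' * s i j') ≠ 0 := fun i => by
      have := ht i; linarith
    set m := L'.length with hm
    set G : (Fin d → ℝ) → ℝ := fun t =>
      ∑ i, ((m.factorial : ℝ) * α i * ((j' :: L').map (s i)).prod) *
        ((1 - ∑ j'', t j'' * s i j'')⁻¹) ^ (m + 1) with hG
    have heq : ((j' :: L').foldr (coordPDeriv d)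
        (fun t : Fin d → ℝ => -∑ i, α i * Real.log (1 - ∑ j, t j * s i j)))
        =ᶠ[nhds t] G :=
      Filter.eventuallyEq_of_mem (hUo.mem_nhds htU) (fun x hx => ih j' x hx)
    have hGd : HasFDerivAt G
        (∑ i, ((m.factorial : ℝ) * α i * ((j' :: L').map (s i)).prod) •
          ((((m : ℝ) + 1) * ((1 - ∑ j'', t j'' * s i j'')⁻¹) ^ m *
             (-((1 - ∑ j'', t j'' * s i j'') ^ 2)⁻¹)) • (-Bmap s i))) t := by
      apply HasFDerivAt.fun_sum
      intro i _
      have h1 : HasDerivAt (fun x : ℝ => (x⁻¹) ^ (m + 1))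
          ((↑(m + 1) : ℝ) * ((1 - ∑ j'', t j'' * s i j'')⁻¹) ^ (m + 1 - 1) *
            (-(((1 - ∑ j'', t j'' * s i j'') ^ 2)⁻¹)))
          (1 - ∑ j'', t j'' * s i j'') := (hasDerivAt_inv (hg i)).pow (m + 1)
      simp only [Nat.add_sub_cancel, Nat.cast_add, Nat.cast_one] at h1
      exact (h1.comp_hasFDerivAt t (hasFDerivAt_g s i t)).const_mul _
    have hfold : ((j :: j' :: L').foldr (coordPDeriv d)
        (fun t : Fin d → ℝ => -∑ i, α i * Real.log (1 - ∑ j, t j * s i j))) t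
        = fderiv ℝ ((j' :: L').foldr (coordPDeriv d)
            (fun t : Fin d → ℝ => -∑ i, α i * Real.log (1 - ∑ j, t j * s i j))) t
            (Pi.single j 1) := rfl
    rw [hfold, Filter.EventuallyEq.fderiv_eq heq, hGd.fderiv]
    simp only [ContinuousLinearMap.sum_apply, ContinuousLinearMap.smul_apply,
      ContinuousLinearMap.neg_apply, Bmap_single, smul_eq_mul,
      List.length_cons, List.map_cons, List.prod_cons]
    apply Finset.sum_congr rfl
    intro i _
    have hx : (1 - ∑ j'', t j'' * s i j'') ≠ 0 := hg i
    have h2 : ((1 - ∑ j'', t j'' * s i j'') ^ 2)⁻¹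
        = ((1 - ∑ j'', t j'' * s i j'')⁻¹) ^ 2 := by rw [inv_pow]
    rw [h2]
    rw [Nat.factorial_succ]
    push_cast
    ring
end Aux

lemma count_sum_eq_length {d : ℕ} (L : List (Fin d)) : ∑ j, L.count j = L.length := by
  rw [← List.sum_toFinset_count_eq_length]
  exact (Finset.sum_subset (Finset.subset_univ _) (fun x _ hx => by
    simpa [List.count_eq_zero] using fun h => hx (List.mem_toFinset.mpr h))).symm

lemma prod_pow_count {d : ℕ} (L : List (Fin d)) (f : Fin d → ℝ) :
    ∏ j, f j ^ L.count j = (L.map f).prod := by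
  rw [Finset.prod_list_map_count]
  exact (Finset.prod_subset (Finset.subset_univ _) (fun x _ hx => by
    have : L.count x = 0 := by
      simpa [List.count_eq_zero] using fun h => hx (List.mem_toFinset.mpr h)
    simp [this])).symm

/-- For `α₁,…,αₙ ≥ 0` and `s₁,…,sₙ ∈ ℝ₊^d`, the cumulant generating function
`K(t) = −Σᵢ αᵢ ln(1 − ⟨t,sᵢ⟩)` of the finitely atomic Gamma convolution is
smooth on `U = {t : ∀ i, ⟨t,sᵢ⟩ < 1}`, takes the value `−Σᵢ αᵢ ln(1+|sᵢ|)` at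
`t = (−1,…,−1)`, and for every nonzero multi-index `k` its iterated partial
derivative of multi-order `k` (taken `k_j` times in the `j`-th coordinate,
encoded by a list `L` of coordinates with counts `k`) at `t = (−1,…,−1)` equals
`(|k|−1)! · Σᵢ αᵢ ∏_j (s_{i,j}/(1+|sᵢ|))^{k_j}`. -/
theorem stmt_10 (d n : ℕ) (hd : 1 ≤ d) (α : Fin n → ℝ) (hα : ∀ i, 0 ≤ α i)
    (s : Fin n → Fin d → ℝ) (hs : ∀ i j, 0 ≤ s i j) :
    ContDiffOn ℝ (⊤ : ℕ∞)
      (fun t : Fin d → ℝ => -∑ i, α i * Real.log (1 - ∑ j, t j * s i j))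
      {t : Fin d → ℝ | ∀ i, ∑ j, t j * s i j < 1} ∧
    (-∑ i, α i * Real.log (1 - ∑ j, (fun _ : Fin d => (-1 : ℝ)) j * s i j)) =
      -∑ i, α i * Real.log (1 + ∑ j, s i j) ∧
    ∀ k : Fin d → ℕ, k ≠ 0 →
      ∀ L : List (Fin d), (∀ j, L.count j = k j) →
        (L.foldr (coordPDeriv d)
            (fun t : Fin d → ℝ => -∑ i, α i * Real.log (1 - ∑ j, t j * s i j)))
            (fun _ => (-1 : ℝ)) =
          (((∑ j, k j) - 1).factorial : ℝ) *
            ∑ i, α i * ∏ j, (s i j / (1 + ∑ j', s i j')) ^ k j := by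
  refine ⟨?_, ?_, ?_⟩
  · intro t ht
    have hg : ∀ i : Fin n, (1 - ∑ j', t j' * s i j') ≠ 0 := fun i => by
      have := ht i; linarith
    apply ContDiffAt.contDiffWithinAt
    apply ContDiffAt.neg
    apply ContDiffAt.sum
    intro i _
    refine contDiffAt_const.mul ?_
    refine (Real.contDiffAt_log.mpr (hg i)).comp (f := fun t : Fin d → ℝ => 1 - ∑ j, t j * s i j) t ?_
    have e : (fun t : Fin d → ℝ => 1 - ∑ j, t j * s i j)
        = fun x => 1 - Bmap s i x := by
      funext x; rw [← Bmap_eq s i]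
    rw [e]
    exact (contDiff_const.sub (Bmap s i).contDiff).contDiffAt
  · simp [sub_neg_eq_add]
  · intro k hk L hL
    -- L is nonempty
    obtain ⟨j0, hj0⟩ := Function.ne_iff.mp hk
    match L with
    | [] => simp at hL; exact absurd ((hL j0).symm) hj0
    | j :: L' =>
      have ht : ∀ i, ∑ j', (fun _ : Fin d => (-1 : ℝ)) j' * s i j' < 1 := by
        intro i
        have h1 : (0:ℝ) ≤ ∑ j', s i j' := Finset.sum_nonneg fun j' _ => hs i j'
        simp only [neg_mul, one_mul, Finset.sum_neg_distrib]
        linarith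
      rw [key α s L' j _ ht]
      have hc : ∀ i : Fin n, (1 - ∑ j', (fun _ : Fin d => (-1:ℝ)) j' * s i j')
          = 1 + ∑ j', s i j' := by
        intro i; simp [sub_neg_eq_add]
      have hM : ∑ j', k j' = L'.length + 1 := by
        rw [← funext hL]
        simpa using count_sum_eq_length (j :: L')
      have hfac : (∑ j', k j') - 1 = L'.length := by rw [hM]; simp
      have hprod : ∀ i : Fin n, ∏ j', (s i j' / (1 + ∑ j'', s i j'')) ^ k j'
          = ((j :: L').map (s i)).prod * ((1 + ∑ j'', s i j'')⁻¹) ^ (L'.length + 1) := by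
        intro i
        simp only [div_eq_mul_inv, mul_pow]
        rw [Finset.prod_mul_distrib, Finset.prod_pow_eq_pow_sum, hM,
          ← funext hL, prod_pow_count]
      simp only [hc, hfac]
      rw [Finset.mul_sum]
      refine Finset.sum_congr rfl fun i _ => ?_
      rw [hprod i]
      ring
end
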